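/- arXiv:2004.06847 — 2 statements merged into one kernel-verified Lean document; each statement's English description precedes it below -/
import Mathlib

section
/- Let H be a dense subgroup of (ℝ,+), let T : ℝⁿ → ℝ be a ℤ-linear map T(t₁,…,tₙ) = k₁t₁ + … + kₙtₙ with integer coefficients, and let s ∈ ℝ. Then the closure in ℝⁿ of the set {a ∈ Hⁿ : T(a) ≤ s} is {a ∈ ℝⁿ : T(a) ≤ s}, provided the set {a ∈ Hⁿ : T(a) ≤ s} is nonempty and T is not identically zero. -/
/-!
`Hⁿ` is dense and `{T < s}` is open, so `Hⁿ ∩ {T < s}` is dense in `{T < s}`. A nonzero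
functional `T` is surjective, hence an open map, so closure commutes with `T⁻¹` and the closure
of `{T < s}` is `{T ≤ s}`.
-/

open Set

theorem closure_dense_inter_preimage_Iic {X α : Type*} [TopologicalSpace X] [TopologicalSpace α]
    [LinearOrder α] [OrderTopology α] [DenselyOrdered α] [NoMinOrder α]
    {D : Set X} (hD : Dense D) {f : X → α} (hf : Continuous f) (hfo : IsOpenMap f) (s : α) :
    closure (D ∩ f ⁻¹' Iic s) = f ⁻¹' Iic s := by
  refine (closure_minimal inter_subset_right (isClosed_Iic.preimage hf)).antisymm ?_
  calc f ⁻¹' Iic s = closure (f ⁻¹' Iio s) := by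
        rw [← hfo.preimage_closure_eq_closure_preimage hf, closure_Iio]
    _ ⊆ closure (closure (f ⁻¹' Iio s ∩ D)) :=
        closure_mono (hD.open_subset_closure_inter (isOpen_Iio.preimage hf))
    _ ⊆ closure (D ∩ f ⁻¹' Iic s) := by
        rw [closure_closure, inter_comm]
        exact closure_mono (inter_subset_inter_right D (preimage_mono Iio_subset_Iic_self))

theorem LinearMap.closure_dense_inter_setOf_le {E : Type*} [AddCommGroup E] [Module ℝ E]
    [TopologicalSpace E] [IsTopologicalAddGroup E] [ContinuousSMul ℝ E] [FiniteDimensional ℝ E]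
    [T2Space E] {D : Set E} (hD : Dense D) {φ : E →ₗ[ℝ] ℝ} (hφ : φ ≠ 0) (s : ℝ) :
    closure (D ∩ {x | φ x ≤ s}) = {x | φ x ≤ s} :=
  closure_dense_inter_preimage_Iic hD φ.continuous_of_finiteDimensional
    (φ.isOpenMap_of_finiteDimensional (LinearMap.surjective_iff_ne_zero.mpr hφ)) s

theorem closure_halfspace_trace_general (H : AddSubgroup ℝ) (hH : Dense (H : Set ℝ))
    (n : ℕ) (k : Fin n → ℤ) (hk : k ≠ 0) (s : ℝ) :
    closure {a : Fin n → ℝ | (∀ i, a i ∈ H) ∧ ∑ i, (k i : ℝ) * a i ≤ s}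
      = {a : Fin n → ℝ | ∑ i, (k i : ℝ) * a i ≤ s} := by
  set φ : (Fin n → ℝ) →ₗ[ℝ] ℝ := ∑ i, (k i : ℝ) • LinearMap.proj i
  have hφ_apply (a : Fin n → ℝ) : φ a = ∑ i, (k i : ℝ) * a i := by simp [φ]
  have hφ : φ ≠ 0 := by
    obtain ⟨i₀, hi₀⟩ := Function.ne_iff.mp hk
    refine fun h ↦ hi₀ ?_
    simpa [hφ_apply, Pi.single_apply] using congrArg (· (Pi.single i₀ 1)) h
  have hHn : Dense (univ.pi fun _ : Fin n ↦ (H : Set ℝ)) := dense_pi univ fun _ _ ↦ hH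
  simpa [hφ_apply, Set.pi, ofPred_and] using φ.closure_dense_inter_setOf_le hHn hφ s

/-- Let `H` be a dense subgroup of `(ℝ, +)` and `T(a) = k₁a₁ + … + kₙaₙ` a nonzero
`ℤ`-linear map. If `{a ∈ Hⁿ : T(a) ≤ s}` is nonempty, then its closure in `ℝⁿ` is the
half-space `{a ∈ ℝⁿ : T(a) ≤ s}`. -/
theorem closure_halfspace_trace (H : AddSubgroup ℝ) (hH : Dense (H : Set ℝ))
    (n : ℕ) (k : Fin n → ℤ) (hk : k ≠ 0) (s : ℝ)
    (hne : {a : Fin n → ℝ | (∀ i, a i ∈ H) ∧ ∑ i, (k i : ℝ) * a i ≤ s}.Nonempty) :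
    closure {a : Fin n → ℝ | (∀ i, a i ∈ H) ∧ ∑ i, (k i : ℝ) * a i ≤ s}
      = {a : Fin n → ℝ | ∑ i, (k i : ℝ) * a i ≤ s} :=
  closure_halfspace_trace_general H hH n k hk s
end

section
/- Let α, β ∈ ℝ/ℤ be irrational. If the cyclic orders C_α and C_β on ℤ coincide (where C_α(k,k',k'') holds iff C(kα, k'α, k''α) for the standard cyclic order C on ℝ/ℤ), then α = β. -/
/-!
Take the representative `a ∈ [0,1)` of `α`. For `k ≠ 0` irrationality gives `0 < fract (k a)`, so
`C_α(0, k, 1)` just says `fract (k a) < a`, i.e. that the rotation by `a` crosses an integer at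
step `k`. Counting these `k ∈ (0, n]` therefore gives `⌊n a⌋`, so `C_α` determines `⌊n a⌋` for every
`n`, and these floors determine `a`.
-/

open Set

/-- The standard cyclic order on `ℝ/ℤ`: for representatives `t, t', t'' ∈ [0,1)`,
`C(t+ℤ, t'+ℤ, t''+ℤ)` holds iff `t < t' < t''` or `t' < t'' < t` or `t'' < t < t'`. -/
def stdCyclic (x y z : AddCircle (1 : ℝ)) : Prop :=
  ∃ t t' t'' : ℝ, t ∈ Ico (0 : ℝ) 1 ∧ t' ∈ Ico (0 : ℝ) 1 ∧ t'' ∈ Ico (0 : ℝ) 1 ∧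
    x = (t : AddCircle (1 : ℝ)) ∧ y = (t' : AddCircle (1 : ℝ)) ∧
    z = (t'' : AddCircle (1 : ℝ)) ∧
    ((t < t' ∧ t' < t'') ∨ (t' < t'' ∧ t'' < t) ∨ (t'' < t ∧ t < t'))

open Int
open scoped Finset

section Floor

variable {𝕜 : Type*} [Field 𝕜] [LinearOrder 𝕜] [IsStrictOrderedRing 𝕜] [FloorRing 𝕜]

theorem Int.floor_add_of_mem_Ico {a : 𝕜} (ha : a ∈ Ico 0 1) (x : 𝕜) :
    ⌊x + a⌋ = ⌊x⌋ + if fract (x + a) < a then 1 else 0 := by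
  have hx := floor_add_fract x
  have hxa := floor_add_fract (x + a)
  have h0 := fract_nonneg x
  have h1 := fract_lt_one x
  have h2 := fract_nonneg (x + a)
  have h3 := fract_lt_one (x + a)
  obtain ⟨ha0, ha1⟩ := ha
  split_ifs with h
  · have hlo : ((⌊x⌋ : ℤ) : 𝕜) < ⌊x + a⌋ := by linarith
    have hhi : ((⌊x + a⌋ : ℤ) : 𝕜) < ⌊x⌋ + 2 := by linarith
    have : ⌊x⌋ < ⌊x + a⌋ := by exact_mod_cast hlo
    have : ⌊x + a⌋ < ⌊x⌋ + 2 := by exact_mod_cast hhi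
    omega
  · have hlo : ((⌊x⌋ : ℤ) : 𝕜) - 1 < ⌊x + a⌋ := by linarith
    have hhi : ((⌊x + a⌋ : ℤ) : 𝕜) < ⌊x⌋ + 1 := by linarith
    have : ⌊x⌋ - 1 < ⌊x + a⌋ := by exact_mod_cast hlo
    have : ⌊x + a⌋ < ⌊x⌋ + 1 := by exact_mod_cast hhi
    omega

theorem Int.floor_nat_mul_eq_card {a : 𝕜} (ha : a ∈ Ico 0 1) (n : ℕ) :
    ⌊n * a⌋ = #{k ∈ Finset.Ioc 0 n | fract ((k : ℕ) * a) < a} := by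
  induction n with
  | zero => simp
  | succ n ih =>
    rw [Finset.card_filter, Finset.sum_Ioc_succ_top n.zero_le, ← Finset.card_filter]
    push_cast
    rw [← ih, add_one_mul, floor_add_of_mem_Ico ha]

theorem eq_of_forall_floor_nat_mul_eq [Archimedean 𝕜] {a b : 𝕜}
    (h : ∀ n : ℕ, ⌊n * a⌋ = ⌊n * b⌋) : a = b := by
  by_contra hne
  obtain ⟨n, hn⟩ := Archimedean.arch 1 (abs_pos.mpr (sub_ne_zero.mpr hne))
  have := abs_sub_lt_one_of_floor_eq_floor (h n)
  rw [← mul_sub, abs_mul, Nat.abs_cast, ← nsmul_eq_mul] at this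
  exact this.not_ge hn

end Floor

theorem Irrational.fract {x : ℝ} (hx : Irrational x) : Irrational (fract x) :=
  hx.sub_intCast _

theorem AddCircle.coe_eq_coe_iff_eq_fract {t : ℝ} (ht : t ∈ Ico 0 1) (x : ℝ) :
    (t : AddCircle (1 : ℝ)) = x ↔ t = fract x := by
  rw [← AddCircle.coe_fract x]
  exact AddCircle.coe_eq_coe_iff_of_mem_Ico (a := 0) (by simpa using ht)
    (by simpa using (⟨fract_nonneg x, fract_lt_one x⟩ : fract x ∈ Ico (0 : ℝ) 1))

theorem stdCyclic_zero_coe_coe (x y : ℝ) :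
    stdCyclic 0 x y ↔ 0 < fract x ∧ fract x < fract y := by
  constructor
  · rintro ⟨t, t', t'', ht, ht', ht'', h0, hx, hy, hord⟩
    rw [← AddCircle.coe_zero, eq_comm, AddCircle.coe_eq_coe_iff_eq_fract ht] at h0
    rw [eq_comm, AddCircle.coe_eq_coe_iff_eq_fract ht'] at hx
    rw [eq_comm, AddCircle.coe_eq_coe_iff_eq_fract ht''] at hy
    subst h0 hx hy
    have := fract_nonneg y
    simp only [fract_zero] at hord
    rcases hord with h | h | h
    · exact h
    · linarith [h.2]
    · linarith [h.1]
  · intro h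
    exact ⟨0, fract x, fract y, ⟨le_rfl, one_pos⟩, ⟨fract_nonneg x, fract_lt_one x⟩,
      ⟨fract_nonneg y, fract_lt_one y⟩, by simp, by simp, by simp, Or.inl h⟩

theorem stdCyclic_zero_zsmul_iff {a : ℝ} (ha : Irrational a) (ha01 : a ∈ Ico 0 1) {k : ℤ}
    (hk : k ≠ 0) : stdCyclic 0 (k • (a : AddCircle (1 : ℝ))) a ↔ fract (k * a) < a := by
  have hka_pos : 0 < fract (k * a) := fract_pos.mpr ((ha.intCast_mul hk).ne_int _)
  rw [← AddCircle.coe_zsmul, zsmul_eq_mul, stdCyclic_zero_coe_coe, fract_eq_self.mpr ha01]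
  exact and_iff_right hka_pos

/-- If `α, β ∈ ℝ/ℤ` are irrational and the pullback cyclic orders `C_α` and `C_β` on `ℤ`
coincide, then `α = β`. -/
theorem cyclic_order_determines_alpha (α β : AddCircle (1 : ℝ))
    (hα : ∃ s : ℝ, Irrational s ∧ (s : AddCircle (1 : ℝ)) = α)
    (hβ : ∃ s : ℝ, Irrational s ∧ (s : AddCircle (1 : ℝ)) = β)
    (h : ∀ k k' k'' : ℤ,
      stdCyclic (k • α) (k' • α) (k'' • α) ↔ stdCyclic (k • β) (k' • β) (k'' • β)) :
    α = β := by
  obtain ⟨s, hs, rfl⟩ := hα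
  obtain ⟨u, hu, rfl⟩ := hβ
  rw [← AddCircle.coe_fract s, ← AddCircle.coe_fract u] at h ⊢
  have hs01 : fract s ∈ Ico 0 1 := ⟨fract_nonneg s, fract_lt_one s⟩
  have hu01 : fract u ∈ Ico 0 1 := ⟨fract_nonneg u, fract_lt_one u⟩
  have hsame : ∀ k : ℕ, k ≠ 0 →
      (fract (k * fract s) < fract s ↔ fract (k * fract u) < fract u) := by
    intro k hk
    have hk' : (k : ℤ) ≠ 0 := by exact_mod_cast hk
    simpa only [zero_zsmul, one_zsmul, stdCyclic_zero_zsmul_iff hs.fract hs01 hk',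
      stdCyclic_zero_zsmul_iff hu.fract hu01 hk', Int.cast_natCast] using h 0 k 1
  refine congrArg _ (eq_of_forall_floor_nat_mul_eq fun n => ?_)
  rw [floor_nat_mul_eq_card hs01, floor_nat_mul_eq_card hu01]
  exact congrArg _ (congrArg _
    (Finset.filter_congr fun k hk => hsame k (Finset.mem_Ioc.mp hk).1.ne'))
end
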